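/- arXiv:2109.08258 — 2 statements merged into one kernel-verified Lean document; each statement's English description precedes it below -/
import Mathlib

section
/- Let C ⊆ ℙ^N be an irreducible projective curve of degree d over the finite field 𝔽_q, not contained in any hyperplane, with N ≥ 1. Then the number of 𝔽_q-rational points of C is at most d·(q + 1). -/
/-- a degree-`d` projective curve `C ⊆ ℙ^N` over `𝔽_q`, not contained in any
hyperplane, has at most `d(q+1)` rational points. Here `C` is given by its set of
`𝔽_q`-points; "degree `d`, not contained in a hyperplane" is rendered by the conditions that
`C` is contained in no hyperplane and meets every hyperplane in at most `d` points. -/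
theorem stmt9 (K : Type) [Field K] [Fintype K] (N d : ℕ) (hN : 1 ≤ N)
    (C : Set (Projectivization K (Fin (N + 1) → K))) (hfin : C.Finite)
    (hnondeg : ∀ φ : (Fin (N + 1) → K) →ₗ[K] K, φ ≠ 0 →
      ¬ (C ⊆ {x : Projectivization K (Fin (N + 1) → K) | φ x.rep = 0}))
    (hdeg : ∀ φ : (Fin (N + 1) → K) →ₗ[K] K, φ ≠ 0 →
      (C ∩ {x : Projectivization K (Fin (N + 1) → K) | φ x.rep = 0}).ncard ≤ d) :
    C.ncard ≤ d * (Fintype.card K + 1) := by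
  classical
  set i0 : Fin (N + 1) := ⟨0, by omega⟩
  set i1 : Fin (N + 1) := ⟨1, by omega⟩
  have hne : i0 ≠ i1 := by simp [i0, i1, Fin.ext_iff]
  -- pencil of hyperplanes indexed by Option K
  set φ : Option K → ((Fin (N + 1) → K) →ₗ[K] K) := fun t =>
    match t with
    | none => LinearMap.proj i1
    | some t => LinearMap.proj i0 - t • LinearMap.proj i1 with hφ
  have hφne : ∀ t, φ t ≠ 0 := by
    rintro (_ | t) h
    · have := congrArg (fun f => f (Pi.single i1 (1 : K))) h
      simp [φ, LinearMap.proj] at this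
    · have := congrArg (fun f => f (Pi.single i0 (1 : K))) h
      simp [φ, LinearMap.proj, Pi.single_eq_of_ne hne.symm] at this
  have hcover : C ⊆ ⋃ t : Option K,
      (C ∩ {x : Projectivization K (Fin (N + 1) → K) | (φ t) x.rep = 0}) := by
    intro x hx
    by_cases h1 : x.rep i1 = 0
    · exact Set.mem_iUnion.2 ⟨none, hx, by simpa [φ, LinearMap.proj] using h1⟩
    · refine Set.mem_iUnion.2 ⟨some (x.rep i0 / x.rep i1), hx, ?_⟩
      simp only [φ, Set.mem_setOf_eq, LinearMap.sub_apply, LinearMap.smul_apply,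
        LinearMap.proj_apply, smul_eq_mul]
      field_simp
      ring
  have hfins : ∀ t : Option K,
      (C ∩ {x : Projectivization K (Fin (N + 1) → K) | (φ t) x.rep = 0}).Finite :=
    fun t => hfin.inter_of_left _
  set F : Option K → Finset (Projectivization K (Fin (N + 1) → K)) :=
    fun t => (hfins t).toFinset with hF
  have hsub : hfin.toFinset ⊆ Finset.univ.biUnion F := by
    intro x hx
    have hxC : x ∈ C := by simpa using hx
    obtain ⟨t, ht⟩ := Set.mem_iUnion.1 (hcover hxC)
    exact Finset.mem_biUnion.2 ⟨t, Finset.mem_univ _, by simpa [F] using ht⟩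
  calc C.ncard = hfin.toFinset.card := Set.ncard_eq_toFinset_card C hfin
    _ ≤ (Finset.univ.biUnion F).card := Finset.card_le_card hsub
    _ ≤ ∑ t : Option K, (F t).card := Finset.card_biUnion_le
    _ ≤ ∑ _t : Option K, d := Finset.sum_le_sum fun t _ => by
        rw [hF]
        calc (hfins t).toFinset.card
            = (C ∩ {x : Projectivization K (Fin (N + 1) → K) | (φ t) x.rep = 0}).ncard :=
              (Set.ncard_eq_toFinset_card _ (hfins t)).symm
          _ ≤ d := hdeg (φ t) (hφne t)
    _ = (Fintype.card K + 1) * d := by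
        simp [Finset.sum_const, Fintype.card_option, mul_comm]
    _ = d * (Fintype.card K + 1) := mul_comm _ _
end

section
/- Let K be a field, let n ≥ 1, and let A, B, C, D ∈ GL₄(K) satisfy: A², B², C², D² are each nonzero scalar matrices; AB = -BA; CD = -DC; A commutes with C and D; B commutes with C and D; and the 16 matrices A^i B^j C^k D^l for i, j, k, l ∈ {0,1} are linearly independent over K (hence form a basis of Mat₄(K)). If M ∈ GL₄(K) is such that M⁻¹·X·M is a scalar multiple of X for each X ∈ {A, B, C, D}, then M is a scalar multiple of A^i B^j C^k D^l for some i, j, k, l ∈ {0,1}. -/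
open Matrix

private lemma aux_move {K : Type} [Field K] (X Y Z W : Matrix (Fin 4) (Fin 4) K) (s : K)
    (h : Y * X = s • (X * Y)) (hZ : Z * X = X * Z) (hW : W * X = X * W) :
    (Z * Y * W) * X = s • (X * (Z * Y * W)) := by
  calc (Z * Y * W) * X = Z * (Y * (W * X)) := by rw [mul_assoc, mul_assoc]
    _ = Z * ((Y * X) * W) := by rw [hW, mul_assoc Y X W]
    _ = Z * ((s • (X * Y)) * W) := by rw [h]
    _ = s • ((Z * X) * (Y * W)) := by
        rw [smul_mul_assoc, mul_smul_comm]
        congr 1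
        rw [mul_assoc, mul_assoc]
    _ = s • (X * (Z * Y * W)) := by
        rw [hZ, mul_assoc X Z, mul_assoc Z Y W]

private lemma aux_flip {K : Type} [Field K] (X Y : Matrix (Fin 4) (Fin 4) K) (s : K)
    (hs : s * s = 1) (h : Y * X = s • (X * Y)) : X * Y = s • (Y * X) := by
  rw [h, smul_smul, hs, one_smul]

private lemma sgn_sq {K : Type} [Field K] (n : ℕ) : ((-1 : K) ^ n) * ((-1 : K) ^ n) = 1 := by
  rw [← mul_pow]; norm_num

private lemma sgn_inj {K : Type} [Field K] (h2 : (2 : K) ≠ 0) (m n : Fin 2)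
    (h : ((-1 : K)) ^ (m : ℕ) = (-1 : K) ^ (n : ℕ)) : m = n := by
  fin_cases m <;> fin_cases n <;> norm_num at h ⊢ <;>
    exact absurd (by first | linear_combination h | linear_combination -h : (2 : K) = 0) h2

/-- if `A, B, C, D ∈ GL₄(K)` square to nonzero scalars, satisfy the
Heisenberg-type commutation relations, and the 16 products `AⁱBʲCᵏDˡ` (`i,j,k,l ∈ {0,1}`)
are linearly independent (hence a basis of `Mat₄(K)`), then any invertible `M` normalizing
each of `A, B, C, D` up to scalars is a scalar multiple of some `AⁱBʲCᵏDˡ`. -/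
theorem stmt11 (K : Type) [Field K] (h2 : (2 : K) ≠ 0)
    (A B C D : Matrix (Fin 4) (Fin 4) K)
    (hAu : IsUnit A) (hBu : IsUnit B) (hCu : IsUnit C) (hDu : IsUnit D)
    (hA : ∃ a : K, a ≠ 0 ∧ A * A = a • (1 : Matrix (Fin 4) (Fin 4) K))
    (hB : ∃ b : K, b ≠ 0 ∧ B * B = b • (1 : Matrix (Fin 4) (Fin 4) K))
    (hC : ∃ c : K, c ≠ 0 ∧ C * C = c • (1 : Matrix (Fin 4) (Fin 4) K))
    (hD : ∃ d : K, d ≠ 0 ∧ D * D = d • (1 : Matrix (Fin 4) (Fin 4) K))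
    (hAB : A * B = -(B * A)) (hCD : C * D = -(D * C))
    (hAC : A * C = C * A) (hAD : A * D = D * A)
    (hBC : B * C = C * B) (hBD : B * D = D * B)
    (hindep : LinearIndependent K (fun p : Fin 2 × Fin 2 × Fin 2 × Fin 2 =>
      A ^ (p.1 : ℕ) * B ^ (p.2.1 : ℕ) * C ^ (p.2.2.1 : ℕ) * D ^ (p.2.2.2 : ℕ)))
    (M : Matrix (Fin 4) (Fin 4) K) (hMu : IsUnit M)
    (hM : ∀ X ∈ ({A, B, C, D} : Set (Matrix (Fin 4) (Fin 4) K)),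
      ∃ c : K, M⁻¹ * X * M = c • X) :
    ∃ (i j k l : Fin 2) (c : K),
      M = c • (A ^ (i : ℕ) * B ^ (j : ℕ) * C ^ (k : ℕ) * D ^ (l : ℕ)) := by
  classical
  have hBA : B * A = -(A * B) := by rw [hAB, neg_neg]
  have hDC : D * C = -(C * D) := by rw [hCD, neg_neg]
  have cAC : Commute A C := hAC
  have cAD : Commute A D := hAD
  have cBC : Commute B C := hBC
  have cBD : Commute B D := hBD
  have hcard : Fintype.card (Fin 2 × Fin 2 × Fin 2 × Fin 2)
      = Module.finrank K (Matrix (Fin 4) (Fin 4) K) := by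
    simp [Module.finrank_matrix]
  let b : Module.Basis (Fin 2 × Fin 2 × Fin 2 × Fin 2) K (Matrix (Fin 4) (Fin 4) K) :=
    basisOfLinearIndependentOfCardEqFinrank hindep hcard
  have hb : ⇑b = (fun p : Fin 2 × Fin 2 × Fin 2 × Fin 2 =>
      A ^ (p.1 : ℕ) * B ^ (p.2.1 : ℕ) * C ^ (p.2.2.1 : ℕ) * D ^ (p.2.2.2 : ℕ)) :=
    coe_basisOfLinearIndependentOfCardEqFinrank hindep hcard
  have hMsum : ∑ p, b.repr M p • b p = M := b.sum_repr M
  have hMne : M ≠ 0 := by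
    rintro rfl
    simp [isUnit_zero_iff] at hMu
  have hex : ∃ p, b.repr M p ≠ 0 := by
    by_contra h
    push_neg at h
    apply hMne
    rw [← hMsum]
    simp [h]
  -- the four sign relations
  have keyA : ∀ p : Fin 2 × Fin 2 × Fin 2 × Fin 2,
      A * b p = ((-1 : K) ^ (p.2.1 : ℕ)) • (b p * A) := by
    rintro ⟨i, j, k, l⟩
    simp only [hb]
    refine aux_flip _ _ _ (sgn_sq _) ?_
    have h1 := aux_move A (B ^ (j : ℕ)) (A ^ (i : ℕ)) (C ^ (k : ℕ) * D ^ (l : ℕ))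
      ((-1 : K) ^ (j : ℕ))
      (by fin_cases j <;> simp [hBA])
      (((Commute.refl A).pow_left _).eq)
      ((((cAC.pow_right _).mul_right (cAD.pow_right _)).symm).eq)
    simpa [mul_assoc] using h1
  have keyB : ∀ p : Fin 2 × Fin 2 × Fin 2 × Fin 2,
      B * b p = ((-1 : K) ^ (p.1 : ℕ)) • (b p * B) := by
    rintro ⟨i, j, k, l⟩
    simp only [hb]
    refine aux_flip _ _ _ (sgn_sq _) ?_
    have h1 := aux_move B (A ^ (i : ℕ)) (1 : Matrix (Fin 4) (Fin 4) K)
      (B ^ (j : ℕ) * (C ^ (k : ℕ) * D ^ (l : ℕ))) ((-1 : K) ^ (i : ℕ))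
      (by fin_cases i <;> simp [hAB])
      (by rw [one_mul, mul_one])
      (((((Commute.refl B).pow_right _).mul_right
        ((cBC.pow_right _).mul_right (cBD.pow_right _))).symm).eq)
    simpa [mul_assoc] using h1
  have keyC : ∀ p : Fin 2 × Fin 2 × Fin 2 × Fin 2,
      C * b p = ((-1 : K) ^ (p.2.2.2 : ℕ)) • (b p * C) := by
    rintro ⟨i, j, k, l⟩
    simp only [hb]
    refine aux_flip _ _ _ (sgn_sq _) ?_
    have h1 := aux_move C (D ^ (l : ℕ))
      (A ^ (i : ℕ) * B ^ (j : ℕ) * C ^ (k : ℕ)) (1 : Matrix (Fin 4) (Fin 4) K)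
      ((-1 : K) ^ (l : ℕ))
      (by fin_cases l <;> simp [hDC])
      (((((cAC.symm.pow_right _).mul_right (cBC.symm.pow_right _)).mul_right
        ((Commute.refl C).pow_right _)).symm).eq)
      (by rw [one_mul, mul_one])
    simpa [mul_assoc] using h1
  have keyD : ∀ p : Fin 2 × Fin 2 × Fin 2 × Fin 2,
      D * b p = ((-1 : K) ^ (p.2.2.1 : ℕ)) • (b p * D) := by
    rintro ⟨i, j, k, l⟩
    simp only [hb]
    refine aux_flip _ _ _ (sgn_sq _) ?_
    have h1 := aux_move D (C ^ (k : ℕ)) (A ^ (i : ℕ) * B ^ (j : ℕ)) (D ^ (l : ℕ))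
      ((-1 : K) ^ (k : ℕ))
      (by fin_cases k <;> simp [hCD])
      (((((cAD.symm.pow_right _).mul_right (cBD.symm.pow_right _))).symm).eq)
      (((Commute.refl D).pow_left _).eq)
    simpa [mul_assoc] using h1
  -- main coefficient argument
  have main : ∀ (X : Matrix (Fin 4) (Fin 4) K) (σ : Fin 2 × Fin 2 × Fin 2 × Fin 2 → K),
      (∀ p, X * b p = σ p • (b p * X)) →
      X ∈ ({A, B, C, D} : Set (Matrix (Fin 4) (Fin 4) K)) →
      ∀ p q, b.repr M p ≠ 0 → b.repr M q ≠ 0 → σ p = σ q := by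
    intro X σ hkey hXmem p q hp hq
    obtain ⟨c, hc⟩ := hM X hXmem
    have hMM : M * M⁻¹ = 1 :=
      Matrix.mul_nonsing_inv M ((Matrix.isUnit_iff_isUnit_det M).mp hMu)
    have hXM : X * M = c • (M * X) := by
      calc X * M = M * (M⁻¹ * X * M) := by
            rw [← mul_assoc, ← mul_assoc, hMM, one_mul]
        _ = M * (c • X) := by rw [hc]
        _ = c • (M * X) := mul_smul_comm c M X
    have hL : (∑ r, (σ r * b.repr M r) • b r) * X = X * M := by
      conv_rhs => rw [← hMsum]
      rw [Finset.sum_mul, Finset.mul_sum]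
      refine Finset.sum_congr rfl fun r _ => ?_
      rw [smul_mul_assoc, mul_comm, ← smul_smul, ← hkey, mul_smul_comm]
    have hR : (∑ r, (c * b.repr M r) • b r) * X = c • (M * X) := by
      conv_rhs => rw [← hMsum]
      rw [Finset.sum_mul, Finset.sum_mul, Finset.smul_sum]
      refine Finset.sum_congr rfl fun r _ => ?_
      rw [smul_mul_assoc, smul_mul_assoc, smul_smul]
    have hXu : IsUnit X := by
      rcases hXmem with rfl | rfl | rfl | h
      · exact hAu
      · exact hBu
      · exact hCu
      · rcases h with rfl | rfl
        · exact hDu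
    have hsums : (∑ r, (σ r * b.repr M r) • b r) = (∑ r, (c * b.repr M r) • b r) :=
      hXu.mul_right_cancel (by rw [hL, hR, hXM])
    have h0 : ∑ r, (σ r * b.repr M r - c * b.repr M r) • b r = 0 := by
      simp only [sub_smul, Finset.sum_sub_distrib, hsums, sub_self]
    have hcoef := Fintype.linearIndependent_iff.mp b.linearIndependent
      (fun r => σ r * b.repr M r - c * b.repr M r) h0
    have hcp : σ p = c := mul_right_cancel₀ hp (sub_eq_zero.mp (hcoef p))
    have hcq : σ q = c := mul_right_cancel₀ hq (sub_eq_zero.mp (hcoef q))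
    rw [hcp, hcq]
  obtain ⟨p₀, hp₀⟩ := hex
  have huniq : ∀ q, b.repr M q ≠ 0 → q = p₀ := by
    intro q hq
    have eA := main A _ keyA (by simp) q p₀ hq hp₀
    have eB := main B _ keyB (by simp) q p₀ hq hp₀
    have eC := main C _ keyC (by simp) q p₀ hq hp₀
    have eD := main D _ keyD (by simp) q p₀ hq hp₀
    exact Prod.ext (sgn_inj h2 _ _ eB)
      (Prod.ext (sgn_inj h2 _ _ eA)
        (Prod.ext (sgn_inj h2 _ _ eD) (sgn_inj h2 _ _ eC)))
  have hM' : M = b.repr M p₀ • b p₀ := by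
    conv_lhs => rw [← hMsum]
    refine Finset.sum_eq_single p₀ (fun q _ hqp => ?_) (by simp)
    have : b.repr M q = 0 := by
      by_contra h
      exact hqp (huniq q h)
    rw [this, zero_smul]
  refine ⟨p₀.1, p₀.2.1, p₀.2.2.1, p₀.2.2.2, b.repr M p₀, ?_⟩
  simp only [hb] at hM'
  exact hM'
end
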